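/- Let G be a minimally nonperfectly divisible graph with a clique cutset X, and let V(G) \ X = V₁ ∪ V₂ with V₁, V₂ nonempty and anticomplete to each other; set G_i = G[X ∪ V_i]. Then for any perfect divisions (A₁,B₁) of G₁ and (A₂,B₂) of G₂, the set X \ ((A₁ ∩ A₂) ∪ (B₁ ∩ B₂)) is nonempty. -/
import Mathlib


open SimpleGraph

variable {V : Type}

/-- The clique number of the subgraph of `G` induced on `S`. -/
noncomputable def omegaOn (G : SimpleGraph V) (S : Set V) : ℕ :=
  sSup {n | ∃ s : Finset V, ↑s ⊆ S ∧ G.IsNClique n s}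

/-- The subgraph of `G` induced on `S` is a perfect graph. -/
def IsPerfectOn (G : SimpleGraph V) (S : Set V) : Prop :=
  ∀ T : Set V, T ⊆ S → (G.induce T).chromaticNumber = (omegaOn G T : ℕ∞)

/-- Every nonempty induced subgraph of `G[S]` admits a perfect division. -/
def PerfDivOn (G : SimpleGraph V) (S : Set V) : Prop :=
  ∀ H : Set V, H ⊆ S → H.Nonempty →
    ∃ A B : Set V, A ∪ B = H ∧ Disjoint A B ∧
      IsPerfectOn G A ∧ omegaOn G B < omegaOn G H

/-- `G` is minimally nonperfectly divisible. -/
def MNPD (G : SimpleGraph V) : Prop :=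
  ¬ PerfDivOn G Set.univ ∧ ∀ S : Set V, S ≠ Set.univ → PerfDivOn G S

/-- The external neighbourhood `N(X)`. -/
def extNbhd (G : SimpleGraph V) (X : Set V) : Set V :=
  {v | v ∉ X ∧ ∃ x ∈ X, G.Adj v x}

lemma omegaSet_nonempty (G : SimpleGraph V) (S : Set V) :
    {n | ∃ s : Finset V, ↑s ⊆ S ∧ G.IsNClique n s}.Nonempty :=
  ⟨0, ∅, by simp, by simp⟩

lemma omegaSet_bddAbove [Fintype V] (G : SimpleGraph V) (S : Set V) :
    BddAbove {n | ∃ s : Finset V, ↑s ⊆ S ∧ G.IsNClique n s} := by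
  refine ⟨Fintype.card V, fun n hn => ?_⟩
  obtain ⟨s, -, hs⟩ := hn
  rw [← hs.card_eq]
  simpa using s.card_le_univ

lemma omegaOn_exists [Fintype V] (G : SimpleGraph V) (S : Set V) :
    ∃ s : Finset V, ↑s ⊆ S ∧ G.IsNClique (omegaOn G S) s :=
  Nat.sSup_mem (omegaSet_nonempty G S) (omegaSet_bddAbove G S)

lemma le_omegaOn [Fintype V] {G : SimpleGraph V} {S : Set V} {s : Finset V}
    (hs : ↑s ⊆ S) (hc : G.IsClique ↑s) : s.card ≤ omegaOn G S :=
  le_csSup (omegaSet_bddAbove G S) ⟨s, hs, hc, rfl⟩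

lemma omegaOn_mono [Fintype V] (G : SimpleGraph V) {S T : Set V} (h : S ⊆ T) :
    omegaOn G S ≤ omegaOn G T :=
  csSup_le_csSup (omegaSet_bddAbove G T) (omegaSet_nonempty G S)
    (fun n hn => by obtain ⟨s, hs, hc⟩ := hn; exact ⟨s, hs.trans h, hc⟩)

lemma clique_lift {G : SimpleGraph V} {T : Set V} {s : Finset V} (hsT : ↑s ⊆ T)
    (hs : G.IsClique ↑s) :
    ∃ t : Finset T, (G.induce T).IsClique ↑t ∧ t.card = s.card := by
  classical
  refine ⟨s.attach.map ⟨fun a => ⟨a.1, hsT a.2⟩,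
    fun a b h => by apply Subtype.ext; simpa using congrArg Subtype.val h⟩, ?_, by simp⟩
  rintro ⟨u, hu⟩ h1 ⟨v, hv⟩ h2 hne
  have hu' : u ∈ s := by
    simp only [Finset.coe_map, Set.mem_image, Finset.mem_coe, Finset.mem_map,
      Finset.mem_attach] at h1
    obtain ⟨a, -, ha⟩ := h1
    have h := congrArg Subtype.val ha
    simp only [Function.Embedding.coeFn_mk] at h
    exact h ▸ a.2
  have hv' : v ∈ s := by
    simp only [Finset.coe_map, Set.mem_image, Finset.mem_coe, Finset.mem_map,
      Finset.mem_attach] at h2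
    obtain ⟨a, -, ha⟩ := h2
    have h := congrArg Subtype.val ha
    simp only [Function.Embedding.coeFn_mk] at h
    exact h ▸ a.2
  have : G.Adj u v := hs hu' hv' (fun h => hne (Subtype.ext h))
  exact this

lemma omegaOn_le_chrom [Fintype V] (G : SimpleGraph V) (T : Set V) :
    (omegaOn G T : ℕ∞) ≤ (G.induce T).chromaticNumber := by
  obtain ⟨s, hsT, hs⟩ := omegaOn_exists G T
  obtain ⟨t, ht, hcard⟩ := clique_lift hsT hs.isClique
  calc (omegaOn G T : ℕ∞) = (t.card : ℕ∞) := by rw [hcard, hs.card_eq]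
  _ ≤ _ := ht.card_le_chromaticNumber

lemma glue_colorable [Fintype V] {G : SimpleGraph V} {T T1 T2 : Set V} {k : ℕ}
    (hT : T = T1 ∪ T2)
    (hanti : ∀ a ∈ T1, a ∉ T2 → ∀ b ∈ T2, b ∉ T1 → ¬ G.Adj a b)
    (hclique : G.IsClique (T1 ∩ T2))
    (h1 : (G.induce T1).Colorable k) (h2 : (G.induce T2).Colorable k) :
    (G.induce T).Colorable k := by
  classical
  obtain ⟨c1⟩ := h1
  obtain ⟨c2⟩ := h2
  set S : Set V := T1 ∩ T2 with hS
  let f1 : S → Fin k := fun v => c1 ⟨v.1, v.2.1⟩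
  let f2 : S → Fin k := fun v => c2 ⟨v.1, v.2.2⟩
  have hf1 : Function.Injective f1 := by
    intro a b hab
    by_contra hne
    have hadj : G.Adj a.1 b.1 := hclique a.2 b.2 (fun h => hne (Subtype.ext h))
    exact c1.valid (by exact hadj : (G.induce T1).Adj ⟨a.1, a.2.1⟩ ⟨b.1, b.2.1⟩) hab
  have hf2 : Function.Injective f2 := by
    intro a b hab
    by_contra hne
    have hadj : G.Adj a.1 b.1 := hclique a.2 b.2 (fun h => hne (Subtype.ext h))
    exact c2.valid (by exact hadj : (G.induce T2).Adj ⟨a.1, a.2.2⟩ ⟨b.1, b.2.2⟩) hab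
  let e : {x // x ∈ Set.range f2} ≃ {x // x ∈ Set.range f1} :=
    (Equiv.ofInjective f2 hf2).symm.trans (Equiv.ofInjective f1 hf1)
  let σ : Equiv.Perm (Fin k) := e.extendSubtype
  have key : ∀ (v : V) (hv1 : v ∈ T1) (hv2 : v ∈ T2),
      σ (c2 ⟨v, hv2⟩) = c1 ⟨v, hv1⟩ := by
    intro v hv1 hv2
    have hvS : v ∈ S := ⟨hv1, hv2⟩
    have hmem : f2 ⟨v, hvS⟩ ∈ Set.range f2 := ⟨⟨v, hvS⟩, rfl⟩
    have h := e.extendSubtype_apply_of_mem (f2 ⟨v, hvS⟩) hmem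
    have h2' : (e ⟨f2 ⟨v, hvS⟩, hmem⟩ : Fin k) = f1 ⟨v, hvS⟩ := by
      show ((Equiv.ofInjective f1 hf1)
        ((Equiv.ofInjective f2 hf2).symm ⟨f2 ⟨v, hvS⟩, hmem⟩) : Fin k) = _
      have hsymm : (Equiv.ofInjective f2 hf2).symm ⟨f2 ⟨v, hvS⟩, hmem⟩ = ⟨v, hvS⟩ := by
        apply hf2
        simp [Equiv.apply_ofInjective_symm hf2]
      rw [hsymm]
      rfl
    exact h.trans h2'
  refine ⟨Coloring.mk (fun v => if h : v.1 ∈ T1 then c1 ⟨v.1, h⟩ else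
      σ (c2 ⟨v.1, by
        have hm : (v.1 : V) ∈ T1 ∪ T2 := by rw [← hT]; exact v.2
        exact hm.resolve_left h⟩)) ?_⟩
  rintro ⟨u, hu⟩ ⟨v, hv⟩ hadj
  have hadj' : G.Adj u v := hadj
  by_cases hu1 : u ∈ T1 <;> by_cases hv1 : v ∈ T1
  · simp only [dif_pos hu1, dif_pos hv1]
    exact c1.valid (by exact hadj' : (G.induce T1).Adj ⟨u, hu1⟩ ⟨v, hv1⟩)
  · have hv2 : v ∈ T2 := by
      have := hv; rw [hT] at this; exact this.resolve_left hv1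
    simp only [dif_pos hu1, dif_neg hv1]
    by_cases hu2 : u ∈ T2
    · rw [← key u hu1 hu2]
      intro hcon
      have := σ.injective hcon
      exact c2.valid (by exact hadj' : (G.induce T2).Adj ⟨u, hu2⟩ ⟨v, hv2⟩) this
    · exact absurd hadj' (hanti u hu1 hu2 v hv2 hv1)
  · have hu2 : u ∈ T2 := by
      have := hu; rw [hT] at this; exact this.resolve_left hu1
    simp only [dif_neg hu1, dif_pos hv1]
    by_cases hv2 : v ∈ T2
    · rw [← key v hv1 hv2]
      intro hcon
      have := σ.injective hcon
      exact c2.valid (by exact hadj' : (G.induce T2).Adj ⟨u, hu2⟩ ⟨v, hv2⟩) this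
    · exact absurd hadj'.symm (hanti v hv1 hv2 u hu2 hu1)
  · have hu2 : u ∈ T2 := by
      have := hu; rw [hT] at this; exact this.resolve_left hu1
    have hv2 : v ∈ T2 := by
      have hm : v ∈ T1 ∪ T2 := by rw [← hT]; exact hv
      exact hm.resolve_left hv1
    simp only [dif_neg hu1, dif_neg hv1]
    intro hcon
    have := σ.injective hcon
    exact c2.valid (by exact hadj' : (G.induce T2).Adj ⟨u, hu2⟩ ⟨v, hv2⟩) this

lemma clique_split {G : SimpleGraph V} {X V1 V2 : Set V}
    (hpart : V1 ∪ V2 = Set.univ \ X) (hd : Disjoint V1 V2)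
    (hanti : ∀ a ∈ V1, ∀ b ∈ V2, ¬ G.Adj a b)
    {s : Set V} (hs : G.IsClique s) :
    s ⊆ X ∪ V1 ∨ s ⊆ X ∪ V2 := by
  have hcover : ∀ v : V, v ∈ X ∨ v ∈ V1 ∨ v ∈ V2 := by
    intro v
    by_cases hv : v ∈ X
    · exact Or.inl hv
    · have : v ∈ V1 ∪ V2 := by rw [hpart]; exact ⟨trivial, hv⟩
      exact Or.inr this
  by_cases h1 : ∃ a ∈ s, a ∈ V1
  · obtain ⟨a, has, haV⟩ := h1
    left
    intro v hvs
    rcases hcover v with h | h | h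
    · exact Or.inl h
    · exact Or.inr h
    · exfalso
      have hne : a ≠ v := fun he => (Set.disjoint_left.mp hd haV) (he ▸ h)
      exact hanti a haV v h (hs has hvs hne)
  · right
    intro v hvs
    rcases hcover v with h | h | h
    · exact Or.inl h
    · exact absurd ⟨v, hvs, h⟩ h1
    · exact Or.inr h

lemma perfect_glue [Fintype V] {G : SimpleGraph V} {X V1 V2 A1 A2 : Set V}
    (hX : G.IsClique X) (hpart : V1 ∪ V2 = Set.univ \ X) (hd : Disjoint V1 V2)
    (hanti : ∀ a ∈ V1, ∀ b ∈ V2, ¬ G.Adj a b)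
    (hA1 : A1 ⊆ X ∪ V1) (hA2 : A2 ⊆ X ∪ V2)
    (hXA : ∀ x ∈ X, x ∈ A1 → x ∈ A2) (hXA' : ∀ x ∈ X, x ∈ A2 → x ∈ A1)
    (p1 : ∀ T : Set V, T ⊆ A1 → (G.induce T).chromaticNumber = (omegaOn G T : ℕ∞))
    (p2 : ∀ T : Set V, T ⊆ A2 → (G.induce T).chromaticNumber = (omegaOn G T : ℕ∞)) :
    ∀ T : Set V, T ⊆ A1 ∪ A2 → (G.induce T).chromaticNumber = (omegaOn G T : ℕ∞) := by
  have hV1X : ∀ v ∈ V1, v ∉ X := by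
    intro v hv
    have : v ∈ Set.univ \ X := by rw [← hpart]; exact Or.inl hv
    exact this.2
  have hV2X : ∀ v ∈ V2, v ∉ X := by
    intro v hv
    have : v ∈ Set.univ \ X := by rw [← hpart]; exact Or.inr hv
    exact this.2
  intro T hT
  set T1 : Set V := T ∩ (X ∪ V1) with hT1
  set T2 : Set V := T ∩ (X ∪ V2) with hT2
  have hTsub1 : T1 ⊆ A1 := by
    rintro v ⟨hvT, hv⟩
    rcases hT hvT with h | h
    · exact h
    · -- v ∈ A2 ⊆ X ∪ V2
      rcases hA2 h with hx | hx
      · exact hXA' v hx h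
      · rcases hv with h' | h'
        · exact absurd h' (hV2X v hx)
        · exact absurd (Set.disjoint_left.mp hd h' hx) (fun _ => False.elim (by tauto))
  have hTsub2 : T2 ⊆ A2 := by
    rintro v ⟨hvT, hv⟩
    rcases hT hvT with h | h
    · rcases hA1 h with hx | hx
      · exact hXA v hx h
      · rcases hv with h' | h'
        · exact absurd h' (hV1X v hx)
        · exact absurd (Set.disjoint_left.mp hd hx h') (fun _ => False.elim (by tauto))
    · exact h
  have hTun : T = T1 ∪ T2 := by
    ext v
    constructor
    · intro hv
      rcases hT hv with h | h
      · exact Or.inl ⟨hv, hA1 h⟩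
      · exact Or.inr ⟨hv, hA2 h⟩
    · rintro (⟨h, -⟩ | ⟨h, -⟩) <;> exact h
  have hcl : G.IsClique (T1 ∩ T2) := by
    intro a ha b hb hne
    have haX : a ∈ X := by
      rcases ha.1.2 with h | h
      · exact h
      · rcases ha.2.2 with h' | h'
        · exact h'
        · exact absurd (Set.disjoint_left.mp hd h h') (fun _ => False.elim (by tauto))
    have hbX : b ∈ X := by
      rcases hb.1.2 with h | h
      · exact h
      · rcases hb.2.2 with h' | h'
        · exact h'
        · exact absurd (Set.disjoint_left.mp hd h h') (fun _ => False.elim (by tauto))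
    exact hX haX hbX hne
  have hanti' : ∀ a ∈ T1, a ∉ T2 → ∀ b ∈ T2, b ∉ T1 → ¬ G.Adj a b := by
    intro a ha ha2 b hb hb1
    have haV1 : a ∈ V1 := by
      rcases ha.2 with h | h
      · exact absurd ⟨ha.1, Or.inl h⟩ ha2
      · exact h
    have hbV2 : b ∈ V2 := by
      rcases hb.2 with h | h
      · exact absurd ⟨hb.1, Or.inl h⟩ hb1
      · exact h
    exact hanti a haV1 b hbV2
  set k : ℕ := omegaOn G T with hk
  have hcol1 : (G.induce T1).Colorable k := by
    have := p1 T1 hTsub1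
    have hle : (G.induce T1).chromaticNumber ≤ (k : ℕ∞) := by
      rw [this]
      exact_mod_cast Nat.cast_le.mpr (omegaOn_mono G (by rw [hTun]; exact Set.subset_union_left))
    exact chromaticNumber_le_iff_colorable.mp hle
  have hcol2 : (G.induce T2).Colorable k := by
    have := p2 T2 hTsub2
    have hle : (G.induce T2).chromaticNumber ≤ (k : ℕ∞) := by
      rw [this]
      exact_mod_cast Nat.cast_le.mpr (omegaOn_mono G (by rw [hTun]; exact Set.subset_union_right))
    exact chromaticNumber_le_iff_colorable.mp hle
  have hcol : (G.induce T).Colorable k := glue_colorable hTun hanti' hcl hcol1 hcol2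
  exact le_antisymm (chromaticNumber_le_iff_colorable.mpr hcol) (omegaOn_le_chrom G T)


theorem stmt_12 [Fintype V] (G : SimpleGraph V) (hG : MNPD G) (hc : G.Connected)
    (X V1 V2 : Set V) (hX : G.IsClique X)
    (hpart : V1 ∪ V2 = Set.univ \ X) (hd : Disjoint V1 V2)
    (h1 : V1.Nonempty) (h2 : V2.Nonempty)
    (hanti : ∀ a ∈ V1, ∀ b ∈ V2, ¬ G.Adj a b) :
    ∀ A1 B1 A2 B2 : Set V,
      A1 ∪ B1 = X ∪ V1 → Disjoint A1 B1 → IsPerfectOn G A1 →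
        omegaOn G B1 < omegaOn G (X ∪ V1) →
      A2 ∪ B2 = X ∪ V2 → Disjoint A2 B2 → IsPerfectOn G A2 →
        omegaOn G B2 < omegaOn G (X ∪ V2) →
      (X \ ((A1 ∩ A2) ∪ (B1 ∩ B2))).Nonempty := by
  intro A1 B1 A2 B2 hu1 hdis1 hp1 hom1 hu2 hdis2 hp2 hom2
  by_contra hcon
  rw [Set.not_nonempty_iff_eq_empty, Set.diff_eq_empty] at hcon
  have hA1s : A1 ⊆ X ∪ V1 := by rw [← hu1]; exact Set.subset_union_left
  have hB1s : B1 ⊆ X ∪ V1 := by rw [← hu1]; exact Set.subset_union_right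
  have hA2s : A2 ⊆ X ∪ V2 := by rw [← hu2]; exact Set.subset_union_left
  have hB2s : B2 ⊆ X ∪ V2 := by rw [← hu2]; exact Set.subset_union_right
  have hV1X : ∀ v ∈ V1, v ∉ X := by
    intro v hv
    have : v ∈ Set.univ \ X := by rw [← hpart]; exact Or.inl hv
    exact this.2
  have hV2X : ∀ v ∈ V2, v ∉ X := by
    intro v hv
    have : v ∈ Set.univ \ X := by rw [← hpart]; exact Or.inr hv
    exact this.2
  have hXA : ∀ x ∈ X, x ∈ A1 → x ∈ A2 := by
    intro x hx hxA
    rcases hcon hx with h | h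
    · exact h.2
    · exact absurd hxA (fun hh => Set.disjoint_left.mp hdis1 hh h.1)
  have hXA' : ∀ x ∈ X, x ∈ A2 → x ∈ A1 := by
    intro x hx hxA
    rcases hcon hx with h | h
    · exact h.1
    · exact absurd hxA (fun hh => Set.disjoint_left.mp hdis2 hh h.2)
  have hXB : ∀ x ∈ X, x ∈ B1 → x ∈ B2 := by
    intro x hx hxB
    rcases hcon hx with h | h
    · exact absurd hxB (fun hh => Set.disjoint_left.mp hdis1 h.1 hh)
    · exact h.2
  have hXB' : ∀ x ∈ X, x ∈ B2 → x ∈ B1 := by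
    intro x hx hxB
    rcases hcon hx with h | h
    · exact absurd hxB (fun hh => Set.disjoint_left.mp hdis2 h.2 hh)
    · exact h.1
  apply hG.1
  intro H hH hHne
  rcases eq_or_ne H Set.univ with rfl | hHuniv
  · refine ⟨A1 ∪ A2, B1 ∪ B2, ?_, ?_, ?_, ?_⟩
    · ext v
      simp only [Set.mem_univ, iff_true, Set.mem_union]
      by_cases hvX : v ∈ X
      · rcases hcon hvX with h | h
        · exact Or.inl (Or.inl h.1)
        · exact Or.inr (Or.inl h.1)
      · have hv : v ∈ V1 ∪ V2 := by rw [hpart]; exact ⟨trivial, hvX⟩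
        rcases hv with h | h
        · have : v ∈ A1 ∪ B1 := by rw [hu1]; exact Or.inr h
          rcases this with h' | h'
          · exact Or.inl (Or.inl h')
          · exact Or.inr (Or.inl h')
        · have : v ∈ A2 ∪ B2 := by rw [hu2]; exact Or.inr h
          rcases this with h' | h'
          · exact Or.inl (Or.inr h')
          · exact Or.inr (Or.inr h')
    · rw [Set.disjoint_left]
      rintro a (ha | ha) (hb | hb)
      · exact Set.disjoint_left.mp hdis1 ha hb
      · -- a ∈ A1, a ∈ B2
        have haX : a ∈ X := by
          rcases hA1s ha with h | h
          · exact h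
          · rcases hB2s hb with h' | h'
            · exact absurd h' (hV1X a h)
            · exact absurd h' (Set.disjoint_left.mp hd h)
        exact Set.disjoint_left.mp hdis2 (hXA a haX ha) hb
      · have haX : a ∈ X := by
          rcases hA2s ha with h | h
          · exact h
          · rcases hB1s hb with h' | h'
            · exact absurd h' (hV2X a h)
            · exact absurd h (Set.disjoint_left.mp hd h')
        exact Set.disjoint_left.mp hdis1 (hXA' a haX ha) hb
      · exact Set.disjoint_left.mp hdis2 ha hb
    · exact perfect_glue hX hpart hd hanti hA1s hA2s hXA hXA' hp1 hp2
    · obtain ⟨s, hsB, hs⟩ := omegaOn_exists G (B1 ∪ B2)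
      have hω1 : omegaOn G (X ∪ V1) ≤ omegaOn G Set.univ :=
        omegaOn_mono G (Set.subset_univ _)
      have hω2 : omegaOn G (X ∪ V2) ≤ omegaOn G Set.univ :=
        omegaOn_mono G (Set.subset_univ _)
      rcases clique_split hpart hd hanti hs.isClique with hcase | hcase
      · have hsub : ↑s ⊆ B1 := by
          intro v hv
          rcases hsB hv with h | h
          · exact h
          · rcases hcase hv with h' | h'
            · exact hXB' v h' h
            · rcases hB2s h with h'' | h''
              · exact absurd h'' (hV1X v h')
              · exact absurd h'' (Set.disjoint_left.mp hd h')
        calc omegaOn G (B1 ∪ B2) = s.card := hs.card_eq.symm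
          _ ≤ omegaOn G B1 := le_omegaOn hsub hs.isClique
          _ < omegaOn G (X ∪ V1) := hom1
          _ ≤ omegaOn G Set.univ := hω1
      · have hsub : ↑s ⊆ B2 := by
          intro v hv
          rcases hsB hv with h | h
          · rcases hcase hv with h' | h'
            · exact hXB v h' h
            · rcases hB1s h with h'' | h''
              · exact absurd h'' (hV2X v h')
              · exact absurd h' (Set.disjoint_left.mp hd h'')
          · exact h
        calc omegaOn G (B1 ∪ B2) = s.card := hs.card_eq.symm
          _ ≤ omegaOn G B2 := le_omegaOn hsub hs.isClique
          _ < omegaOn G (X ∪ V2) := hom2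
          _ ≤ omegaOn G Set.univ := hω2
  · exact hG.2 H hHuniv H subset_rfl hHne
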